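/- Let 𝔘₁ be the poset with involution ({a < b}, θ = {(a,b)}) over an algebraically closed field k. Then every indecomposable representation of 𝔘₁ is isomorphic to one of: the trivial representation S = (k,0); L_{1,1} with L₀ = k⟨e⟩ and L_{(a,b)} = ⟨(0,e)⟩; L_{2,1} with L₀ = k⟨e⟩ and L_{(a,b)} = ⟨(0,e),(e,0)⟩; or L_{3,1} with L₀ = k⟨e₁,e₂⟩ and L_{(a,b)} = ⟨(0,e₁),(e₁,e₂)⟩. -/

import Mathlib

open scoped Classical

/-! ## Representations of the poset with involution `𝔘_n`
`𝔘_n` is the chain `a_n < ⋯ < a₁ < b₁ < ⋯ < b_n` with involution classes `z_i = (a_i, b_i)`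
(indexed here by `Fin n`, `i : Fin n` corresponding to the class `(a_{i+1}, b_{i+1})`).
A representation is a finite-dimensional space `V₀` together with subspaces
`W i ⊆ V₀ × V₀` (coordinates = values at `a_i` and `b_i`) subject to the conditions
coming from the order:  `a_i < a_j` iff `j < i`, `a_i < b_j` always, `b_i < b_j` iff
`i < j`. -/

structure RepU (k : Type) [Field k] (n : ℕ) where
  V0 : Type
  [acg : AddCommGroup V0]
  [mod : Module k V0]
  [fd : FiniteDimensional k V0]
  W : Fin n → Submodule k (V0 × V0)
  c1 : ∀ i j : Fin n, j < i → ∀ p ∈ W i, ((p.1, 0) : V0 × V0) ∈ W j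
  c2 : ∀ i j : Fin n, ∀ p ∈ W i, ((0, p.1) : V0 × V0) ∈ W j
  c3 : ∀ i j : Fin n, i < j → ∀ p ∈ W i, ((0, p.2) : V0 × V0) ∈ W j

attribute [instance] RepU.acg RepU.mod RepU.fd

variable {k : Type} [Field k] {n : ℕ}

/-- Morphisms of representations of `𝔘_n`. -/
@[ext]
structure HomU (V V' : RepU k n) where
  φ : V.V0 →ₗ[k] V'.V0
  maps : ∀ i : Fin n, ∀ p ∈ V.W i, ((φ p.1, φ p.2) : V'.V0 × V'.V0) ∈ V'.W i

namespace HomU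

def comp {U V W : RepU k n} (g : HomU V W) (f : HomU U V) : HomU U W :=
  ⟨g.φ ∘ₗ f.φ, fun i p hp => g.maps i _ (f.maps i p hp)⟩

def idH (V : RepU k n) : HomU V V := ⟨LinearMap.id, fun _ _ hp => hp⟩

def zeroH (V V' : RepU k n) : HomU V V' :=
  ⟨0, fun i _ _ => by simp; exact (V'.W i).zero_mem⟩

end HomU

/-- The trivial representation `S`. -/
def IsSU (V : RepU k n) : Prop :=
  Module.finrank k V.V0 = 1 ∧ ∀ j, V.W j = ⊥

/-- `V ≅ L_{1,i}`:  `V₀ = k⟨e⟩`, `W j = 0` for `j < i` and `W j = ⟨(0,e)⟩` for `j ≥ i`. -/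
def IsL1U (V : RepU k n) (i : Fin n) : Prop :=
  ∃ e : V.V0, e ≠ 0 ∧ Submodule.span k {e} = ⊤ ∧
    ∀ j, V.W j = if j < i then ⊥ else Submodule.span k {((0, e) : V.V0 × V.V0)}

/-- `V ≅ L_{2,i}`:  `V₀ = k⟨e⟩`, `W j = ⟨(0,e),(e,0)⟩` for `j ≤ i`, `⟨(0,e)⟩` for `j > i`. -/
def IsL2U (V : RepU k n) (i : Fin n) : Prop :=
  ∃ e : V.V0, e ≠ 0 ∧ Submodule.span k {e} = ⊤ ∧
    ∀ j, V.W j = if j ≤ i then Submodule.span k {((0, e) : V.V0 × V.V0), (e, 0)}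
      else Submodule.span k {((0, e) : V.V0 × V.V0)}

/-- `V ≅ L_{3,i}`:  `V₀ = k⟨e₁,e₂⟩`, `W j = ⟨(0,e₁),(e₁,0)⟩` for `j < i`,
`⟨(0,e₁),(e₁,e₂)⟩` for `j = i`, `⟨(0,e₁),(0,e₂)⟩` for `j > i`. -/
def IsL3U (V : RepU k n) (i : Fin n) : Prop :=
  ∃ e₁ e₂ : V.V0, LinearIndependent k ![e₁, e₂] ∧
    Submodule.span k {e₁, e₂} = ⊤ ∧
    ∀ j, V.W j =
      if j < i then Submodule.span k {((0, e₁) : V.V0 × V.V0), (e₁, 0)}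
      else if j = i then Submodule.span k {((0, e₁) : V.V0 × V.V0), (e₁, e₂)}
      else Submodule.span k {((0, e₁) : V.V0 × V.V0), (0, e₂)}

/-- `V` is indecomposable:  nonzero, and its only idempotent endomorphisms are `0` and the
identity. -/
def IndecU (V : RepU k n) : Prop :=
  (∃ v : V.V0, v ≠ 0) ∧
    ∀ f : HomU V V, HomU.comp f f = f → f = HomU.zeroH V V ∨ f = HomU.idH V

/-!
Every case is detected by an idempotent endomorphism of `V₀` of rank one or two that preserves
`W = V.W 0`; indecomposability forces it to be the identity, which pins `V₀` down.
If some `c` is not a second coordinate of `W`, project onto `k c` along a hyperplane containing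
all coordinates of `W`: this gives `S`. A nonzero `c` with `(c, 0) ∈ W` gives `L_{2,1}`, and a
`c` with `(0, c) ∈ W` that is not a first coordinate gives `L_{1,1}`. Otherwise
`W = {(g y, y)}` for an endomorphism `g` with `g ∘ g = 0` and `ker g = range g`. Choosing `d`
with `g d ≠ 0` and `φ` with `φ d = 0`, `φ (g d) = 1`, the idempotent
`y ↦ φ (g y) • d + φ y • g d` commutes with `g`, so `V₀ = ⟨g d, d⟩`: this is `L_{3,1}`.
-/

theorem Submodule.exists_dual_apply_eq_one_of_notMem {K M : Type*} [Field K] [AddCommGroup M]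
    [Module K M] {p : Submodule K M} {x : M} (hx : x ∉ p) :
    ∃ φ : Module.Dual K M, φ x = 1 ∧ ∀ y ∈ p, φ y = 0 := by
  obtain ⟨f, hfx, hfp⟩ := p.exists_dual_map_eq_bot_of_notMem hx inferInstance
  refine ⟨(f x)⁻¹ • f, inv_mul_cancel₀ hfx, fun y hy => ?_⟩
  rw [LinearMap.smul_apply, (Submodule.eq_bot_iff _).1 hfp _ (Submodule.mem_map_of_mem hy),
    smul_zero]

theorem Submodule.exists_linearMap_mem_iff_fst_eq {R M N : Type*} [Ring R] [AddCommGroup M]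
    [Module R M] [AddCommGroup N] [Module R N] (W : Submodule R (M × N))
    (hW₀ : ∀ x, (x, 0) ∈ W → x = 0) (hW : W.map (LinearMap.snd R M N) = ⊤) :
    ∃ g : N →ₗ[R] M, ∀ p, p ∈ W ↔ p.1 = g p.2 := by
  set f := (LinearEquiv.prodComm R M N).toLinearMap ∘ₗ W.subtype
  have hsurj : Function.Surjective (Prod.fst ∘ f) := fun y => by
    obtain ⟨p, hp, rfl⟩ := Submodule.mem_map.1 (hW ▸ Submodule.mem_top (x := y))
    exact ⟨⟨p, hp⟩, rfl⟩
  have hline : ∀ w₁ w₂, (f w₁).1 = (f w₂).1 → (f w₁).2 = (f w₂).2 := by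
    rintro ⟨p, hp⟩ ⟨q, hq⟩ h
    have h' : p.2 = q.2 := h
    refine sub_eq_zero.1 (hW₀ (p.1 - q.1) ?_)
    convert W.sub_mem hp hq using 1
    ext <;> simp [h']
  obtain ⟨g, hg⟩ := LinearMap.exists_range_eq_graph hsurj hline
  exact ⟨g, fun p => by simpa [f] using SetLike.ext_iff.1 hg p.swap⟩

theorem LinearMap.apply_notMem_span_singleton {K M : Type*} [Field K] [AddCommGroup M]
    [Module K M] (g : M →ₗ[K] M) (hg : ∀ y, g (g y) = 0) {d : M} (hd : g d ≠ 0) :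
    g d ∉ Submodule.span K {d} := fun h => by
  obtain ⟨a, ha⟩ := Submodule.mem_span_singleton.1 h
  have had : a • g d = 0 := by rw [← map_smul, ha, hg]
  rcases smul_eq_zero.1 had with rfl | h0
  · exact hd (by rw [← ha, zero_smul])
  · exact hd h0

namespace IndecU

section

variable {V : RepU k n}

theorem eq_id_of_isIdempotentElem (hV : IndecU V) {π : V.V0 →ₗ[k] V.V0}
    (hπ : IsIdempotentElem π) (hπ0 : π ≠ 0) (hW : ∀ i, ∀ p ∈ V.W i, (π p.1, π p.2) ∈ V.W i) :
    π = LinearMap.id := by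
  rcases hV.2 ⟨π, hW⟩ (HomU.ext hπ) with h | h
  · exact absurd (congrArg HomU.φ h) hπ0
  · exact congrArg HomU.φ h

theorem smulRight_eq_id (hV : IndecU V) {c : V.V0} {φ : Module.Dual k V.V0} (hc : φ c = 1)
    (hW : ∀ i, ∀ p ∈ V.W i, (φ p.1 • c, φ p.2 • c) ∈ V.W i) : φ.smulRight c = LinearMap.id := by
  have hc₀ : c ≠ 0 := by rintro rfl; simp at hc
  refine hV.eq_id_of_isIdempotentElem ?_ (fun h => hc₀ ?_) hW
  · ext y; simp [hc]
  · simpa [hc] using LinearMap.congr_fun h c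

end

section

variable {V : RepU k 1}

theorem isSU_of_notMem_map_snd (hV : IndecU V) {c : V.V0}
    (hc : c ∉ (V.W 0).map (LinearMap.snd k V.V0 V.V0)) : IsSU V := by
  obtain ⟨φ, hφc, hφR⟩ := Submodule.exists_dual_apply_eq_one_of_notMem hc
  have hR : ∀ p ∈ V.W 0, φ p.1 = 0 ∧ φ p.2 = 0 := fun p hp =>
    ⟨hφR _ (Submodule.mem_map_of_mem (V.c2 0 0 p hp)), hφR _ (Submodule.mem_map_of_mem hp)⟩
  have hφ : ∀ y, φ y • c = y := LinearMap.congr_fun <|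
    hV.smulRight_eq_id hφc (Fin.forall_fin_one.2 fun p hp => by
      rw [(hR p hp).1, (hR p hp).2, zero_smul]; exact (V.W 0).zero_mem)
  have hc₀ : c ≠ 0 := by rintro rfl; simp at hφc
  refine ⟨(finrank_eq_one_iff_of_nonzero' c hc₀).2 fun y => ⟨φ y, hφ y⟩,
    Fin.forall_fin_one.2 ((Submodule.eq_bot_iff _).2 fun p hp => ?_)⟩
  exact Prod.ext (by rw [← hφ p.1, (hR p hp).1, zero_smul]; rfl)
    (by rw [← hφ p.2, (hR p hp).2, zero_smul]; rfl)

theorem isL2U_of_mk_zero_mem (hV : IndecU V) {c : V.V0} (hc₀ : c ≠ 0) (hc : (c, 0) ∈ V.W 0) :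
    IsL2U V 0 := by
  obtain ⟨φ, hφc, -⟩ :=
    Submodule.exists_dual_apply_eq_one_of_notMem (p := (⊥ : Submodule k V.V0)) (by simpa using hc₀)
  have hc' : (0, c) ∈ V.W 0 := V.c2 0 0 _ hc
  have hsplit : ∀ p : V.V0 × V.V0,
      φ p.2 • ((0 : V.V0), c) + φ p.1 • (c, 0) = (φ p.1 • c, φ p.2 • c) := fun p => by simp
  have hφ : ∀ y, φ y • c = y := LinearMap.congr_fun <|
    hV.smulRight_eq_id hφc (Fin.forall_fin_one.2 fun p _ =>
      hsplit p ▸ add_mem ((V.W 0).smul_mem _ hc') ((V.W 0).smul_mem _ hc))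
  refine ⟨c, hc₀, Submodule.eq_top_iff'.2 fun y => Submodule.mem_span_singleton.2 ⟨φ y, hφ y⟩,
    Fin.forall_fin_one.2 ?_⟩
  rw [if_pos le_rfl]
  refine le_antisymm (fun p _ => Submodule.mem_span_pair.2 ⟨φ p.2, φ p.1, ?_⟩)
    (Submodule.span_le.2 (Set.insert_subset hc' (Set.singleton_subset_iff.2 hc)))
  exact (hsplit p).trans (Prod.ext (hφ _) (hφ _))

theorem isL1U_of_zero_mk_mem (hV : IndecU V) {c : V.V0} (hc : (0, c) ∈ V.W 0)
    (hcA : c ∉ (V.W 0).map (LinearMap.fst k V.V0 V.V0)) : IsL1U V 0 := by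
  obtain ⟨φ, hφc, hφA⟩ := Submodule.exists_dual_apply_eq_one_of_notMem hcA
  have hA : ∀ p ∈ V.W 0, φ p.1 = 0 := fun p hp => hφA _ (Submodule.mem_map_of_mem hp)
  have hφ : ∀ y, φ y • c = y := LinearMap.congr_fun <|
    hV.smulRight_eq_id hφc (Fin.forall_fin_one.2 fun p hp => by
      simpa [hA p hp] using (V.W 0).smul_mem (φ p.2) hc)
  refine ⟨c, ?_, Submodule.eq_top_iff'.2 fun y => Submodule.mem_span_singleton.2 ⟨φ y, hφ y⟩,
    Fin.forall_fin_one.2 ?_⟩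
  · rintro rfl; simp at hφc
  rw [if_neg (lt_irrefl 0)]
  refine le_antisymm (fun p hp => Submodule.mem_span_singleton.2 ⟨φ p.2, ?_⟩)
    (Submodule.span_le.2 (Set.singleton_subset_iff.2 hc))
  rw [Prod.smul_mk, smul_zero, hφ]
  exact Prod.ext (by rw [← hφ p.1, hA p hp, zero_smul]) rfl

theorem isL3U_of_mem_iff (hV : IndecU V) {g : V.V0 →ₗ[k] V.V0}
    (hg : ∀ p, p ∈ V.W 0 ↔ p.1 = g p.2) (hker : LinearMap.ker g ≤ LinearMap.range g) :
    IsL3U V 0 := by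
  have hgg : ∀ y, g (g y) = 0 := fun y => ((hg _).1 (V.c2 0 0 _ ((hg (g y, y)).2 rfl))).symm
  obtain ⟨d, hd⟩ : ∃ d, g d ≠ 0 := by
    obtain ⟨v, hv⟩ := hV.1
    by_cases hgv : g v = 0
    · obtain ⟨d, rfl⟩ := hker hgv
      exact ⟨d, hv⟩
    · exact ⟨v, hgv⟩
  obtain ⟨φ, hφgd, hφd⟩ :=
    Submodule.exists_dual_apply_eq_one_of_notMem (g.apply_notMem_span_singleton hgg hd)
  replace hφd : φ d = 0 := hφd d (Submodule.mem_span_singleton_self d)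
  set π := (φ ∘ₗ g).smulRight d + φ.smulRight (g d)
  have hπg : ∀ y, π (g y) = g (π y) := fun y => by simp [π, hgg]
  have hπ : ∀ y, φ (g y) • d + φ y • g d = y := LinearMap.congr_fun <|
    hV.eq_id_of_isIdempotentElem (π := π) (by ext y; simp [π, hgg, hφd, hφgd])
      (fun h => hd (by simpa [π, hφd, hφgd] using congrArg g (LinearMap.congr_fun h d)))
      (Fin.forall_fin_one.2 fun p hp => (hg _).2 (by rw [(hg p).1 hp, hπg]))
  refine ⟨g d, d, LinearIndependent.pair_iff.2 fun s t hst => ?_,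
    Submodule.eq_top_iff'.2 fun y =>
      Submodule.mem_span_pair.2 ⟨φ y, φ (g y), (add_comm _ _).trans (hπ y)⟩,
    Fin.forall_fin_one.2 ?_⟩
  · obtain rfl : s = 0 := by simpa [hφd, hφgd] using congrArg φ hst
    have ht : t = 0 ∨ d = 0 := by simpa using hst
    exact ⟨rfl, ht.resolve_right fun h => hd (by rw [h, map_zero])⟩
  rw [if_neg (lt_irrefl 0), if_pos rfl]
  refine le_antisymm ?_ (Submodule.span_le.2 (Set.insert_subset ((hg _).2 (hgg d).symm)
    (Set.singleton_subset_iff.2 ((hg _).2 rfl))))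
  rintro ⟨x, y⟩ hp
  obtain rfl : x = g y := (hg _).1 hp
  refine Submodule.mem_span_pair.2 ⟨φ y, φ (g y), Prod.ext ?_ ?_⟩
  · simpa [hgg] using congrArg g (hπ y)
  · simpa [add_comm] using hπ y

end

end IndecU

theorem indecomposables_of_U1_general
    {k : Type} [Field k] (V : RepU k 1) (hV : IndecU V) :
    IsSU V ∨ IsL1U V 0 ∨ IsL2U V 0 ∨ IsL3U V 0 := by
  by_cases hR : ∃ c, c ∉ (V.W 0).map (LinearMap.snd k V.V0 V.V0)
  · obtain ⟨c, hc⟩ := hR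
    exact Or.inl (hV.isSU_of_notMem_map_snd hc)
  by_cases hA₀ : ∃ c ≠ 0, (c, 0) ∈ V.W 0
  · obtain ⟨c, hc₀, hc⟩ := hA₀
    exact Or.inr <| Or.inr <| Or.inl <| hV.isL2U_of_mk_zero_mem hc₀ hc
  by_cases hB : ∃ c, (0, c) ∈ V.W 0 ∧ c ∉ (V.W 0).map (LinearMap.fst k V.V0 V.V0)
  · obtain ⟨c, hc, hcA⟩ := hB
    exact Or.inr <| Or.inl <| hV.isL1U_of_zero_mk_mem hc hcA
  push Not at hR hA₀ hB
  obtain ⟨g, hg⟩ := (V.W 0).exists_linearMap_mem_iff_fst_eq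
    (fun x hx => by_contra fun hx₀ => hA₀ x hx₀ hx) (Submodule.eq_top_iff'.2 hR)
  refine Or.inr <| Or.inr <| Or.inr <| hV.isL3U_of_mem_iff hg fun y hy => ?_
  obtain ⟨p, hp, rfl⟩ := Submodule.mem_map.1 (hB y ((hg _).2 (LinearMap.mem_ker.1 hy).symm))
  exact ⟨p.2, ((hg p).1 hp).symm⟩

/-- Over an algebraically closed field `k`, every indecomposable
representation of `𝔘₁ = ({a < b}, θ = {(a,b)})` is isomorphic to one of:  the trivial
representation `S`, `L_{1,1}`, `L_{2,1}`, or `L_{3,1}`. -/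
theorem indecomposables_of_U1
    {k : Type} [Field k] [IsAlgClosed k] (V : RepU k 1) (hV : IndecU V) :
    IsSU V ∨ IsL1U V 0 ∨ IsL2U V 0 ∨ IsL3U V 0 :=
  indecomposables_of_U1_general V hV
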